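/- arXiv:2108.12374 — 6 statements merged into one kernel-verified Lean document; each statement's English description precedes it below -/
import Mathlib

section
/- Let μ₁, μ₂, μ₃ be finite signed Borel measures on a topological space M such that λ²·μ₁ + 2λ·μ₂ + μ₃ ≥ 0 (as measures) for every real λ. Then μ₁ and μ₃ are nonnegative measures, and the total variation measure of μ₂ satisfies |μ₂| ≤ √(μ₁·μ₃), where √(μ₁·μ₃) is defined via densities with respect to any common dominating measure. -/
open MeasureTheory

lemma quad_coeff_nonneg {a b c : ℝ} (h : ∀ l : ℝ, 0 ≤ a * l ^ 2 + b * l + c) : 0 ≤ a := by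
  by_contra ha
  push_neg at ha
  set l := Real.sqrt ((|c| + 1) / (-a)) with hl
  have hl2 : l ^ 2 = (|c| + 1) / (-a) := Real.sq_sqrt (by apply div_nonneg (by positivity); linarith)
  have h1 := h l
  have h2 := h (-l)
  have key : 0 ≤ a * l ^ 2 + c := by nlinarith
  rw [hl2] at key
  have hane : a ≠ 0 := ne_of_lt ha
  rw [show a * ((|c| + 1) / (-a)) = -(|c| + 1) by rw [div_neg, mul_neg, ← mul_div_assoc, mul_div_cancel_left₀ _ hane]] at key
  have := le_abs_self c
  linarith

lemma quad_sqrt_bound {a b c : ℝ} (h : ∀ l : ℝ, 0 ≤ a * l ^ 2 + 2 * b * l + c) :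
    |b| ≤ Real.sqrt (a * c) := by
  have hd : discrim a (2 * b) c ≤ 0 :=
    discrim_le_zero fun x => by have := h x; nlinarith
  rw [discrim] at hd
  have hb2 : b ^ 2 ≤ a * c := by nlinarith
  calc |b| = Real.sqrt (b ^ 2) := (Real.sqrt_sq_eq_abs b).symm
    _ ≤ Real.sqrt (a * c) := Real.sqrt_le_sqrt hb2

/-- If `μ₁, μ₂, μ₃` are finite signed Borel measures on a topological space `M`
with `λ²·μ₁ + 2λ·μ₂ + μ₃ ≥ 0` for every real `λ`, then `μ₁` and `μ₃` are nonnegative and the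
total variation measure of `μ₂` is dominated by the "geometric mean" measure `√(μ₁ μ₃)`,
which is defined via densities with respect to any common (finite) dominating measure. -/
theorem stmt_0 {M : Type*} [TopologicalSpace M] [MeasurableSpace M] [BorelSpace M]
    (μ₁ μ₂ μ₃ : SignedMeasure M)
    (h : ∀ l : ℝ, 0 ≤ (l ^ 2) • μ₁ + (2 * l) • μ₂ + μ₃) :
    0 ≤ μ₁ ∧ 0 ≤ μ₃ ∧
      ∀ ι : Measure M, IsFiniteMeasure ι →
        μ₁ ≪ᵥ ι.toENNRealVectorMeasure → μ₃ ≪ᵥ ι.toENNRealVectorMeasure →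
          μ₂.totalVariation ≤
            ι.withDensity fun x =>
              ENNReal.ofReal (Real.sqrt (μ₁.rnDeriv ι x * μ₃.rnDeriv ι x)) := by
  have hset : ∀ s : Set M, MeasurableSet s → ∀ l : ℝ,
      0 ≤ μ₁ s * l ^ 2 + 2 * μ₂ s * l + μ₃ s := by
    intro s hs l
    have := (h l) s hs
    simp only [VectorMeasure.add_apply, VectorMeasure.smul_apply, smul_eq_mul,
      VectorMeasure.zero_apply] at this
    linarith
  have hμ₁ : 0 ≤ μ₁ := by
    intro s hs
    simpa using quad_coeff_nonneg (a := μ₁ s) (b := 2 * μ₂ s) (c := μ₃ s) (hset s hs)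
  have hμ₃ : 0 ≤ μ₃ := by simpa using h 0
  refine ⟨hμ₁, hμ₃, ?_⟩
  intro ι hι h1 h3
  set f₁ := μ₁.rnDeriv ι with hf₁def
  set f₂ := μ₂.rnDeriv ι with hf₂def
  set f₃ := μ₃.rnDeriv ι with hf₃def
  have hac2 : μ₂ ≪ᵥ ι.toENNRealVectorMeasure := by
    refine VectorMeasure.AbsolutelyContinuous.mk fun s hs h0 => ?_
    have e1 : μ₁ s = 0 := h1 h0
    have e3 : μ₃ s = 0 := h3 h0
    have hp := hset s hs 1
    have hn := hset s hs (-1)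
    rw [e1, e3] at hp hn
    linarith
  have hint1 : Integrable f₁ ι := SignedMeasure.integrable_rnDeriv μ₁ ι
  have hint2 : Integrable f₂ ι := SignedMeasure.integrable_rnDeriv μ₂ ι
  have hint3 : Integrable f₃ ι := SignedMeasure.integrable_rnDeriv μ₃ ι
  have heq1 := μ₁.withDensityᵥ_rnDeriv_eq ι h1
  have heq2 := μ₂.withDensityᵥ_rnDeriv_eq ι hac2
  have heq3 := μ₃.withDensityᵥ_rnDeriv_eq ι h3
  have hsint : ∀ (g : M → ℝ) (hg : Integrable g ι) (ν : SignedMeasure M),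
      ι.withDensityᵥ g = ν → ∀ s : Set M, MeasurableSet s → ∫ x in s, g x ∂ι = ν s := by
    intro g hg ν hgν s hs
    rw [← hgν, withDensityᵥ_apply hg hs]
  -- a.e. quadratic nonnegativity for a fixed real l
  have hq : ∀ l : ℝ, ∀ᵐ x ∂ι, 0 ≤ f₁ x * l ^ 2 + 2 * f₂ x * l + f₃ x := by
    intro l
    have hgint : Integrable (fun x => f₁ x * l ^ 2 + 2 * f₂ x * l + f₃ x) ι :=
      ((hint1.mul_const _).add ((hint2.const_mul 2).mul_const l)).add hint3
    refine ae_nonneg_of_forall_setIntegral_nonneg hgint fun s hs _ => ?_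
    have e : ∫ x in s, (f₁ x * l ^ 2 + 2 * f₂ x * l + f₃ x) ∂ι
        = (μ₁ s) * l ^ 2 + 2 * (μ₂ s) * l + μ₃ s := by
      rw [integral_add (f := fun x => f₁ x * l ^ 2 + 2 * f₂ x * l) (g := f₃)
          ((by exact (hint1.mul_const _).add ((hint2.const_mul 2).mul_const l) :
            Integrable (fun x => f₁ x * l ^ 2 + 2 * f₂ x * l) ι).integrableOn)
          hint3.integrableOn,
        integral_add (f := fun x => f₁ x * l ^ 2) (g := fun x => 2 * f₂ x * l)
          ((hint1.mul_const _).integrableOn)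
          (((hint2.const_mul 2).mul_const l).integrableOn),
        integral_mul_const, integral_mul_const]
      have e2 : ∫ x in s, 2 * f₂ x ∂ι = 2 * ∫ x in s, f₂ x ∂ι := integral_const_mul 2 _
      rw [e2, hsint f₁ hint1 μ₁ heq1 s hs, hsint f₂ hint2 μ₂ heq2 s hs,
        hsint f₃ hint3 μ₃ heq3 s hs]
    rw [e]
    exact hset s hs l
  have hae : ∀ᵐ x ∂ι, |f₂ x| ≤ Real.sqrt (f₁ x * f₃ x) := by
    have hqq : ∀ᵐ x ∂ι, ∀ q : ℚ, 0 ≤ f₁ x * (q : ℝ) ^ 2 + 2 * f₂ x * q + f₃ x :=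
      ae_all_iff.2 fun q => hq q
    filter_upwards [hqq] with x hx
    refine quad_sqrt_bound (b := f₂ x) fun l => ?_
    have hcont : Continuous fun l : ℝ => f₁ x * l ^ 2 + 2 * f₂ x * l + f₃ x := by continuity
    have hclosed : IsClosed {l : ℝ | 0 ≤ f₁ x * l ^ 2 + 2 * f₂ x * l + f₃ x} :=
      isClosed_le continuous_const hcont
    have hsub : Set.range ((↑) : ℚ → ℝ) ⊆ {l : ℝ | 0 ≤ f₁ x * l ^ 2 + 2 * f₂ x * l + f₃ x} := by
      rintro _ ⟨q, rfl⟩; exact hx q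
    have : l ∈ closure (Set.range ((↑) : ℚ → ℝ)) := by
      rw [Rat.denseRange_cast.closure_range]; trivial
    have hmem := (hclosed.closure_subset_iff.2 hsub) this
    have : 0 ≤ f₁ x * l ^ 2 + 2 * f₂ x * l + f₃ x := hmem
    linarith
  have hsqrt_meas : Measurable fun x => Real.sqrt (f₁ x * f₃ x) :=
    Real.continuous_sqrt.measurable.comp
      ((μ₁.measurable_rnDeriv ι).mul (μ₃.measurable_rnDeriv ι))
  have hsqrt_int : Integrable (fun x => Real.sqrt (f₁ x * f₃ x)) ι := by
    refine Integrable.mono (hint1.abs.add hint3.abs) hsqrt_meas.aestronglyMeasurable ?_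
    filter_upwards with x
    simp only [Pi.add_apply]
    rw [Real.norm_eq_abs, Real.norm_eq_abs, abs_of_nonneg (Real.sqrt_nonneg _),
      abs_of_nonneg (by positivity : (0:ℝ) ≤ |f₁ x| + |f₃ x|)]
    have h1' : f₁ x * f₃ x ≤ (|f₁ x| + |f₃ x|) ^ 2 := by
      nlinarith [abs_nonneg (f₁ x), abs_nonneg (f₃ x), le_abs_self (f₁ x * f₃ x),
        abs_mul (f₁ x) (f₃ x)]
    calc Real.sqrt (f₁ x * f₃ x) ≤ Real.sqrt ((|f₁ x| + |f₃ x|) ^ 2) := Real.sqrt_le_sqrt h1'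
      _ = |f₁ x| + |f₃ x| := Real.sqrt_sq (by positivity)
  have hbound : ∀ A : Set M, MeasurableSet A →
      ENNReal.ofReal |μ₂ A| ≤ ∫⁻ x in A, ENNReal.ofReal (Real.sqrt (f₁ x * f₃ x)) ∂ι := by
    intro A hA
    have hμ2A : μ₂ A = ∫ x in A, f₂ x ∂ι := (hsint f₂ hint2 μ₂ heq2 A hA).symm
    have habs : |μ₂ A| ≤ ∫ x in A, Real.sqrt (f₁ x * f₃ x) ∂ι := by
      rw [hμ2A]
      calc |∫ x in A, f₂ x ∂ι| ≤ ∫ x in A, |f₂ x| ∂ι := by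
            simpa [Real.norm_eq_abs] using
              norm_integral_le_integral_norm (μ := ι.restrict A) f₂
        _ ≤ ∫ x in A, Real.sqrt (f₁ x * f₃ x) ∂ι :=
          integral_mono_ae hint2.abs.integrableOn hsqrt_int.integrableOn
            (ae_restrict_of_ae hae)
    calc ENNReal.ofReal |μ₂ A| ≤ ENNReal.ofReal (∫ x in A, Real.sqrt (f₁ x * f₃ x) ∂ι) :=
        ENNReal.ofReal_le_ofReal habs
      _ = ∫⁻ x in A, ENNReal.ofReal (Real.sqrt (f₁ x * f₃ x)) ∂ι :=
        ofReal_integral_eq_lintegral_ofReal hsqrt_int.integrableOn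
          (ae_restrict_of_ae (Filter.Eventually.of_forall fun x => Real.sqrt_nonneg _))
  rw [Measure.le_iff]
  intro t ht
  obtain ⟨i, hi₁, hi₂, hi₃, hpos, hneg⟩ := μ₂.toJordanDecomposition_spec
  rw [SignedMeasure.totalVariation, Measure.add_apply, hpos, hneg,
    SignedMeasure.toMeasureOfZeroLE_apply _ hi₂ hi₁ ht,
    SignedMeasure.toMeasureOfLEZero_apply _ hi₃ hi₁.compl ht,
    ← ENNReal.ofReal_eq_coe_nnreal, ← ENNReal.ofReal_eq_coe_nnreal,
    withDensity_apply _ ht, ← lintegral_inter_add_diff _ t hi₁, Set.diff_eq,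
    Set.inter_comm t i, Set.inter_comm t iᶜ]
  refine add_le_add ?_ ?_
  · exact le_trans (ENNReal.ofReal_le_ofReal (le_abs_self _)) (hbound _ (hi₁.inter ht))
  · exact le_trans (ENNReal.ofReal_le_ofReal (neg_le_abs _)) (hbound _ (hi₁.compl.inter ht))
end

section
/- Let μ₁, μ₂, μ₃ be finite signed Borel measures on M with λ²·μ₁ + 2λ·μ₂ + μ₃ ≥ 0 for every real λ. Then μ₂ is absolutely continuous with respect to both μ₁ and μ₃, and the total variation norms satisfy ‖μ₂‖_TV ≤ √(‖μ₁‖_TV · ‖μ₃‖_TV). -/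
open MeasureTheory

/-- Leading coefficient of an everywhere-nonnegative quadratic is nonnegative. -/
lemma aux_quad_lead {a b c : ℝ} (h : ∀ x : ℝ, 0 ≤ a * x ^ 2 + b * x + c) : 0 ≤ a := by
  by_contra ha
  push_neg at ha
  have hna : 0 < -a := by linarith
  set x := Real.sqrt ((|c| + 1) / (-a)) with hx
  have hxx : x ^ 2 = (|c| + 1) / (-a) := by
    apply Real.sq_sqrt
    positivity
  have h1 := h x
  have h2 := h (-x)
  have hax : a * x ^ 2 = -(|c| + 1) := by
    rw [hxx]
    field_simp
    rw [div_self ha.ne]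
  nlinarith [le_abs_self c, neg_abs_le c]

/-- Cauchy–Schwarz style inequality for the split into a set and its complement. -/
lemma aux_cs {a₁ a₂ c₁ c₂ b₁ b₂ : ℝ} (ha₁ : 0 ≤ a₁) (ha₂ : 0 ≤ a₂) (hc₁ : 0 ≤ c₁)
    (hc₂ : 0 ≤ c₂) (h1 : b₁ ^ 2 ≤ a₁ * c₁) (h2 : b₂ ^ 2 ≤ a₂ * c₂) :
    b₁ - b₂ ≤ Real.sqrt ((a₁ + a₂) * (c₁ + c₂)) := by
  have hb₁ : b₁ ≤ Real.sqrt (a₁ * c₁) := Real.le_sqrt_of_sq_le h1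
  have hb₂ : -b₂ ≤ Real.sqrt (a₂ * c₂) := Real.le_sqrt_of_sq_le (by nlinarith)
  have key : Real.sqrt (a₁ * c₁) + Real.sqrt (a₂ * c₂) ≤
      Real.sqrt ((a₁ + a₂) * (c₁ + c₂)) := by
    rw [show (a₁:ℝ) * c₁ = Real.sqrt a₁ ^ 2 * Real.sqrt c₁ ^ 2 by
          rw [Real.sq_sqrt ha₁, Real.sq_sqrt hc₁],
        show (a₂:ℝ) * c₂ = Real.sqrt a₂ ^ 2 * Real.sqrt c₂ ^ 2 by
          rw [Real.sq_sqrt ha₂, Real.sq_sqrt hc₂]]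
    rw [show Real.sqrt a₁ ^ 2 * Real.sqrt c₁ ^ 2 = (Real.sqrt a₁ * Real.sqrt c₁) ^ 2 by ring,
        show Real.sqrt a₂ ^ 2 * Real.sqrt c₂ ^ 2 = (Real.sqrt a₂ * Real.sqrt c₂) ^ 2 by ring,
        Real.sqrt_sq_eq_abs, Real.sqrt_sq_eq_abs]
    rw [abs_of_nonneg (by positivity), abs_of_nonneg (by positivity)]
    apply Real.le_sqrt_of_sq_le
    have hs1 := Real.sq_sqrt ha₁
    have hs2 := Real.sq_sqrt ha₂
    have hs3 := Real.sq_sqrt hc₁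
    have hs4 := Real.sq_sqrt hc₂
    nlinarith [sq_nonneg (Real.sqrt a₁ * Real.sqrt c₂ - Real.sqrt a₂ * Real.sqrt c₁),
      Real.sqrt_nonneg a₁, Real.sqrt_nonneg a₂, Real.sqrt_nonneg c₁, Real.sqrt_nonneg c₂]
  linarith

/-- Pointwise quadratic inequality for signed measures. -/
lemma aux_key {α : Type*} [MeasurableSpace α] (μ₁ μ₂ μ₃ : SignedMeasure α)
    (h : ∀ l : ℝ, 0 ≤ (l ^ 2) • μ₁ + (2 * l) • μ₂ + μ₃) {A : Set α} (hA : MeasurableSet A) :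
    0 ≤ μ₁ A ∧ 0 ≤ μ₃ A ∧ (μ₂ A) ^ 2 ≤ μ₁ A * μ₃ A := by
  have hq : ∀ l : ℝ, 0 ≤ μ₁ A * l ^ 2 + (2 * μ₂ A) * l + μ₃ A := by
    intro l
    have := (VectorMeasure.le_iff.mp (h l)) A hA
    simp only [VectorMeasure.add_apply, VectorMeasure.smul_apply, VectorMeasure.zero_apply,
      smul_eq_mul] at this
    linarith [this]
  have h1 : 0 ≤ μ₁ A := aux_quad_lead hq
  have h3 : 0 ≤ μ₃ A := by simpa using hq 0
  have hd : discrim (μ₁ A) (2 * μ₂ A) (μ₃ A) ≤ 0 := by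
    apply discrim_le_zero
    intro x
    have := hq x
    nlinarith
  rw [discrim] at hd
  exact ⟨h1, h3, by nlinarith⟩

/-- Total variation of a signed measure on a measurable set, in terms of a Hahn decomposition. -/
lemma aux_tv {α : Type*} [MeasurableSpace α] (s : SignedMeasure α) {S : Set α}
    (hS : MeasurableSet S) :
    ∃ i : Set α, MeasurableSet i ∧ 0 ≤ s (i ∩ S) ∧ s (iᶜ ∩ S) ≤ 0 ∧
      s.totalVariation S =
        ENNReal.ofReal (s (i ∩ S)) + ENNReal.ofReal (-s (iᶜ ∩ S)) := by
  obtain ⟨i, hi₁, hi₂, hi₃, hpos, hneg⟩ := s.toJordanDecomposition_spec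
  have h₁ : 0 ≤ s (i ∩ S) :=
    s.nonneg_of_zero_le_restrict (s.zero_le_restrict_subset hi₁ Set.inter_subset_left hi₂)
  have h₂ : s (iᶜ ∩ S) ≤ 0 :=
    s.nonpos_of_restrict_le_zero (s.restrict_le_zero_subset hi₁.compl Set.inter_subset_left hi₃)
  refine ⟨i, hi₁, h₁, h₂, ?_⟩
  rw [SignedMeasure.totalVariation, Measure.add_apply, hpos, hneg,
    SignedMeasure.toMeasureOfZeroLE_apply _ hi₂ hi₁ hS,
    SignedMeasure.toMeasureOfLEZero_apply _ hi₃ hi₁.compl hS]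
  rw [ENNReal.ofReal_eq_coe_nnreal h₁, ENNReal.ofReal_eq_coe_nnreal (by linarith : (0:ℝ) ≤ -s (iᶜ ∩ S))]

/-- If a signed measure vanishes on all measurable subsets of `S`, its total variation of `S`
is zero. -/
lemma aux_tv_zero {α : Type*} [MeasurableSpace α] (s : SignedMeasure α) {S : Set α}
    (hS : MeasurableSet S) (h : ∀ B ⊆ S, MeasurableSet B → s B = 0) :
    s.totalVariation S = 0 := by
  obtain ⟨i, hi, _, _, heq⟩ := aux_tv s hS
  rw [heq, h (i ∩ S) Set.inter_subset_right (hi.inter hS),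
    h (iᶜ ∩ S) Set.inter_subset_right (hi.compl.inter hS)]
  simp

/-- If `μ₁, μ₂, μ₃` are finite signed Borel measures on `M` with
`λ²·μ₁ + 2λ·μ₂ + μ₃ ≥ 0` for every real `λ`, then `μ₂ ≪ μ₁`, `μ₂ ≪ μ₃` (in the sense of total
variation measures) and the total variation norms satisfy `‖μ₂‖_TV ≤ √(‖μ₁‖_TV·‖μ₃‖_TV)`. -/
theorem stmt_1 {M : Type*} [TopologicalSpace M] [MeasurableSpace M] [BorelSpace M]
    (μ₁ μ₂ μ₃ : SignedMeasure M)
    (h : ∀ l : ℝ, 0 ≤ (l ^ 2) • μ₁ + (2 * l) • μ₂ + μ₃) :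
    μ₂.totalVariation ≪ μ₁.totalVariation ∧
    μ₂.totalVariation ≪ μ₃.totalVariation ∧
    μ₂.totalVariation Set.univ ≤
      (μ₁.totalVariation Set.univ * μ₃.totalVariation Set.univ) ^ (1 / 2 : ℝ) := by
  have key := fun {A : Set M} (hA : MeasurableSet A) => aux_key μ₁ μ₂ μ₃ h hA
  constructor
  · refine Measure.AbsolutelyContinuous.mk fun S hS hS0 => ?_
    refine aux_tv_zero μ₂ hS fun B hBS hB => ?_
    have h1B : μ₁ B = 0 := by
      apply SignedMeasure.null_of_totalVariation_zero
      exact measure_mono_null hBS hS0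
    have := key hB
    nlinarith [this.1, this.2.1, this.2.2, sq_nonneg (μ₂ B)]
  constructor
  · refine Measure.AbsolutelyContinuous.mk fun S hS hS0 => ?_
    refine aux_tv_zero μ₂ hS fun B hBS hB => ?_
    have h3B : μ₃ B = 0 := by
      apply SignedMeasure.null_of_totalVariation_zero
      exact measure_mono_null hBS hS0
    have := key hB
    nlinarith [this.1, this.2.1, this.2.2, sq_nonneg (μ₂ B)]
  -- norm inequality
  · -- total variation of the nonnegative measures μ₁, μ₃
    have tv_nonneg : ∀ (ν : SignedMeasure M), (∀ {A : Set M}, MeasurableSet A → 0 ≤ ν A) →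
        ν.totalVariation Set.univ = ENNReal.ofReal (ν Set.univ) := by
      intro ν hν
      obtain ⟨i, hi, h₁, h₂, heq⟩ := aux_tv ν MeasurableSet.univ
      have h₂' : ν (iᶜ ∩ Set.univ) = 0 :=
        le_antisymm h₂ (hν (hi.compl.inter MeasurableSet.univ))
      have hsum : ν (i ∩ Set.univ) + ν (iᶜ ∩ Set.univ) = ν Set.univ := by
        rw [← ν.of_union (disjoint_compl_right.mono Set.inter_subset_left Set.inter_subset_left)
          (hi.inter MeasurableSet.univ) (hi.compl.inter MeasurableSet.univ)]
        congr 1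
        simp [Set.inter_univ, Set.union_compl_self]
      rw [heq, h₂']
      simp only [neg_zero, ENNReal.ofReal_zero, add_zero]
      congr 1
      rw [h₂'] at hsum
      linarith
    have h1u := (key MeasurableSet.univ).1
    have h3u := (key MeasurableSet.univ).2.1
    have tv1 : μ₁.totalVariation Set.univ = ENNReal.ofReal (μ₁ Set.univ) :=
      tv_nonneg μ₁ fun hA => (key hA).1
    have tv3 : μ₃.totalVariation Set.univ = ENNReal.ofReal (μ₃ Set.univ) :=
      tv_nonneg μ₃ fun hA => (key hA).2.1
    obtain ⟨i, hi, h₁, h₂, heq⟩ := aux_tv μ₂ MeasurableSet.univ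
    rw [heq, tv1, tv3]
    rw [← ENNReal.ofReal_add h₁ (by linarith), ← ENNReal.ofReal_mul h1u,
      ENNReal.ofReal_rpow_of_nonneg (by nlinarith) (by norm_num : (0:ℝ) ≤ 1/2)]
    apply ENNReal.ofReal_le_ofReal
    rw [← Real.sqrt_eq_rpow]
    -- set up the Cauchy–Schwarz inequality over i and iᶜ
    have hiu : MeasurableSet (i ∩ Set.univ) := hi.inter MeasurableSet.univ
    have hicu : MeasurableSet (iᶜ ∩ Set.univ) := hi.compl.inter MeasurableSet.univ
    have k1 := key hiu
    have k2 := key hicu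
    have hsum : ∀ (ν : SignedMeasure M), ν (i ∩ Set.univ) + ν (iᶜ ∩ Set.univ) = ν Set.univ := by
      intro ν
      rw [← ν.of_union (disjoint_compl_right.mono Set.inter_subset_left Set.inter_subset_left)
        hiu hicu]
      congr 1
      simp [Set.inter_univ, Set.union_compl_self]
    have e1 := hsum μ₁
    have e3 := hsum μ₃
    have := aux_cs k1.1 k2.1 k1.2.1 k2.2.1 k1.2.2 k2.2.2
    rw [e1, e3] at this
    linarith
end

section
/- Let μ₁, μ₂, μ₃ be finite signed Borel measures on M satisfying λ²·μ₁ + 2λ·μ₂ + μ₃ ≥ 0 for all real λ, and let m be a σ-finite reference Borel measure. Decompose each μᵢ = ρᵢ·m + (μᵢ)⊥ into m-absolutely continuous and m-singular parts. Then (μ₁)⊥ and (μ₃)⊥ are nonnegative, and the densities satisfy |ρ₂|² ≤ ρ₁·ρ₃ m-almost everywhere. -/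
open MeasureTheory

lemma aux_negPart_eq_zero {α : Type*} [MeasurableSpace α] {s : SignedMeasure α}
    (hs : 0 ≤ s) : s.toJordanDecomposition.negPart = 0 := by
  obtain ⟨i, hi₁, hi₂, hi₃, hpos, hneg⟩ := s.toJordanDecomposition_spec
  rw [hneg]
  ext j hj
  rw [SignedMeasure.toMeasureOfLEZero_apply _ _ _ hj, Measure.coe_zero, Pi.zero_apply]
  have h1 : 0 ≤ s (iᶜ ∩ j) := by
    have := (VectorMeasure.le_iff.1 hs) (iᶜ ∩ j) (hi₁.compl.inter hj)
    simpa using this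
  have h2 : s (iᶜ ∩ j) ≤ 0 := by
    have := hi₃ (iᶜ ∩ j) (hi₁.compl.inter hj)
    rw [s.restrict_apply hi₁.compl (hi₁.compl.inter hj),
      VectorMeasure.restrict_apply _ hi₁.compl (hi₁.compl.inter hj)] at this
    rwa [show iᶜ ∩ j ∩ iᶜ = iᶜ ∩ j by ext x; simp; tauto, VectorMeasure.zero_apply] at this
  have : s (iᶜ ∩ j) = 0 := le_antisymm h2 h1
  simp [this]

lemma aux_singularPart_nonneg {α : Type*} [MeasurableSpace α] {s : SignedMeasure α}
    (hs : 0 ≤ s) (m : Measure α) : 0 ≤ s.singularPart m := by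
  rw [SignedMeasure.singularPart]
  simp only [aux_negPart_eq_zero hs, Measure.singularPart_zero,
    Measure.toSignedMeasure_zero, sub_zero]
  exact Measure.zero_le_toSignedMeasure _

lemma aux_rnDeriv_nonneg {α : Type*} [MeasurableSpace α] {s : SignedMeasure α}
    (hs : 0 ≤ s) (m : Measure α) : ∀ᵐ x ∂m, 0 ≤ s.rnDeriv m x := by
  filter_upwards [Measure.rnDeriv_zero m] with x hx
  rw [SignedMeasure.rnDeriv, aux_negPart_eq_zero hs, hx]
  simp [ENNReal.toReal_nonneg]

/-- If `μ₁, μ₂, μ₃` are finite signed Borel measures on `M` with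
`λ²·μ₁ + 2λ·μ₂ + μ₃ ≥ 0` for every real `λ`, and `m` is a σ-finite reference Borel measure,
then the `m`-singular parts of `μ₁` and `μ₃` are nonnegative, and the densities
`ρᵢ = d(μᵢ)_≪/dm` of the `m`-absolutely continuous parts satisfy `|ρ₂|² ≤ ρ₁·ρ₃` m-a.e. -/
theorem stmt_2 {M : Type*} [TopologicalSpace M] [MeasurableSpace M] [BorelSpace M]
    (m : Measure M) [SigmaFinite m] (μ₁ μ₂ μ₃ : SignedMeasure M)
    (h : ∀ l : ℝ, 0 ≤ (l ^ 2) • μ₁ + (2 * l) • μ₂ + μ₃) :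
    0 ≤ μ₁.singularPart m ∧ 0 ≤ μ₃.singularPart m ∧
      ∀ᵐ x ∂m, |μ₂.rnDeriv m x| ^ 2 ≤ μ₁.rnDeriv m x * μ₃.rnDeriv m x := by
  -- nonnegativity of μ₁ and μ₃
  have hμ₃ : 0 ≤ μ₃ := by simpa using h 0
  have hμ₁ : 0 ≤ μ₁ := by
    rw [VectorMeasure.le_iff]
    intro i hi
    by_contra hneg
    push_neg at hneg
    simp only [VectorMeasure.zero_apply] at hneg ⊢
    set a := μ₁ i
    set b := μ₂ i
    set c := μ₃ i
    obtain ⟨n, hn⟩ := exists_nat_gt (max 1 ((2 * |b| + |c| + 1) / (-a)))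
    set t : ℝ := (n : ℝ)
    have ht1 : 1 < t := lt_of_le_of_lt (le_max_left _ _) hn
    have htpos : 0 < t := by linarith
    have hdiv : (2 * |b| + |c| + 1) / (-a) < t := lt_of_le_of_lt (le_max_right _ _) hn
    have hlt : 2 * |b| + |c| + 1 < t * (-a) :=
      (div_lt_iff₀ (by linarith : (0:ℝ) < -a)).1 hdiv
    have hq := (VectorMeasure.le_iff.1 (h t)) i hi
    simp only [VectorMeasure.add_apply, VectorMeasure.smul_apply, VectorMeasure.zero_apply,
      smul_eq_mul] at hq
    nlinarith [mul_lt_mul_of_pos_right hlt htpos,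
      mul_le_mul_of_nonneg_left (le_abs_self b) htpos.le,
      mul_nonneg (by linarith : (0:ℝ) ≤ t - 1) (abs_nonneg c),
      le_abs_self c, abs_nonneg b, abs_nonneg c]
  refine ⟨aux_singularPart_nonneg hμ₁ m, aux_singularPart_nonneg hμ₃ m, ?_⟩
  -- a.e. statement
  have key : ∀ q : ℚ, ∀ᵐ x ∂m, 0 ≤ (q:ℝ)^2 * μ₁.rnDeriv m x
      + 2 * (q:ℝ) * μ₂.rnDeriv m x + μ₃.rnDeriv m x := by
    intro q
    set s : SignedMeasure M := ((q:ℝ) ^ 2) • μ₁ + (2 * (q:ℝ)) • μ₂ + μ₃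
    have hs : 0 ≤ s := h q
    have h1 : s.rnDeriv m =ᵐ[m] fun x => (q:ℝ)^2 * μ₁.rnDeriv m x
        + 2 * (q:ℝ) * μ₂.rnDeriv m x + μ₃.rnDeriv m x := by
      have e1 := SignedMeasure.rnDeriv_add (((q:ℝ) ^ 2) • μ₁ + (2 * (q:ℝ)) • μ₂) μ₃ m
      have e2 := SignedMeasure.rnDeriv_add (((q:ℝ) ^ 2) • μ₁) ((2 * (q:ℝ)) • μ₂) m
      have e3 := SignedMeasure.rnDeriv_smul μ₁ m ((q:ℝ) ^ 2)
      have e4 := SignedMeasure.rnDeriv_smul μ₂ m (2 * (q:ℝ))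
      filter_upwards [e1, e2, e3, e4] with x h1 h2 h3 h4
      simp only [Pi.add_apply, Pi.smul_apply, smul_eq_mul] at *
      rw [h1, h2, h3, h4]
    filter_upwards [aux_rnDeriv_nonneg hs m, h1] with x hx he
    rw [← he]; exact hx
  rw [← ae_all_iff] at key
  filter_upwards [key] with x hx
  set a := μ₁.rnDeriv m x
  set b := μ₂.rnDeriv m x
  set c := μ₃.rnDeriv m x
  have hall : ∀ l : ℝ, 0 ≤ a * (l * l) + (2 * b) * l + c := by
    have hcont : Continuous fun l : ℝ => a * (l * l) + (2 * b) * l + c := by continuity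
    have hclosed : IsClosed ((fun l : ℝ => a * (l * l) + (2 * b) * l + c) ⁻¹' Set.Ici 0) :=
      IsClosed.preimage hcont isClosed_Ici
    have hsub : Set.range ((↑) : ℚ → ℝ) ⊆
        (fun l : ℝ => a * (l * l) + (2 * b) * l + c) ⁻¹' Set.Ici 0 := by
      rintro _ ⟨q, rfl⟩
      have := hx q
      simp only [Set.mem_preimage, Set.mem_Ici]
      nlinarith [hx q]
    intro l
    have : (Set.univ : Set ℝ) ⊆ (fun l : ℝ => a * (l * l) + (2 * b) * l + c) ⁻¹' Set.Ici 0 := by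
      rw [← Rat.denseRange_cast.closure_eq]
      exact hclosed.closure_subset_iff.2 hsub
    exact this (Set.mem_univ l)
  have hd := discrim_le_zero hall
  rw [discrim] at hd
  have : b ^ 2 ≤ a * c := by nlinarith
  calc |b| ^ 2 = b ^ 2 := sq_abs b
    _ ≤ a * c := this
end

section
/- Let M be an L²-normed L∞-module over a σ-finite measure space (M, m) whose norm satisfies the parallelogram identity (a Hilbert module). Then for every bounded linear functional l on M there exists a unique v ∈ M such that l(w) = ∫_M ⟨v, w⟩ dm for all w ∈ M, where ⟨·,·⟩ is the pointwise scalar product; moreover the map v ↦ L_v with L_v(w) := ⟨v,w⟩ is a pointwise-isometric module isomorphism from M onto the dual module M* = Hom(M; L¹(M,m)). -/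
open MeasureTheory

/-- A bounded measurable real function (an "L∞-scalar"). -/
def IsBddMeasurable {M : Type*} [MeasurableSpace M] (f : M → ℝ) : Prop :=
  Measurable f ∧ ∃ C, ∀ x, |f x| ≤ C

/-- A Hilbert `L∞(M, m)`-module: a real Hilbert space `V` whose inner product is the integral
of a pointwise scalar product `pip` (obtained by polarizing the pointwise norm `|·|`), which
is `L∞`-bilinear for the multiplication `lsmul` by bounded measurable functions.  In particular
`‖v‖_V = ‖ |v| ‖_{L²}` with `|v| = √(pip v v)`, so `V` is L²-normed. -/
structure HilbertModule {M : Type*} [MeasurableSpace M] (m : Measure M) (V : Type*)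
    [NormedAddCommGroup V] [InnerProductSpace ℝ V] [CompleteSpace V] where
  pip : V → V → M → ℝ
  pip_symm : ∀ v w, pip v w =ᵐ[m] pip w v
  pip_add_left : ∀ u v w, pip (u + v) w =ᵐ[m] pip u w + pip v w
  pip_smul_left : ∀ (c : ℝ) v w, pip (c • v) w =ᵐ[m] fun x => c * pip v w x
  pip_nonneg : ∀ v, ∀ᵐ x ∂m, 0 ≤ pip v v x
  pip_integrable : ∀ v w, Integrable (pip v w) m
  inner_eq : ∀ v w, (inner ℝ v w : ℝ) = ∫ x, pip v w x ∂m
  /-- multiplication by (bounded measurable) `L∞`-functions -/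
  lsmul : (M → ℝ) → V → V
  lsmul_add : ∀ f v w, IsBddMeasurable f → lsmul f (v + w) = lsmul f v + lsmul f w
  lsmul_one : ∀ v, lsmul (fun _ => 1) v = v
  lsmul_pip : ∀ f, IsBddMeasurable f → ∀ v w,
    pip (lsmul f v) w =ᵐ[m] fun x => f x * pip v w x

/-- A module morphism `V → L¹(M, m)`, i.e. an element of the dual module `M*`. -/
def HilbertModule.IsModuleMorphism {M : Type*} [MeasurableSpace M] {m : Measure M}
    {V : Type*} [NormedAddCommGroup V] [InnerProductSpace ℝ V] [CompleteSpace V]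
    (S : HilbertModule m V) (T : V →L[ℝ] Lp ℝ 1 m) : Prop :=
  ∀ f, IsBddMeasurable f → ∀ v, ⇑(T (S.lsmul f v)) =ᵐ[m] fun x => f x * (T v) x

section Aux
variable {M : Type*} [MeasurableSpace M] {m : Measure M}

/-- If all integrals against bounded measurable functions vanish, the function is a.e. ≤ 0. -/
lemma ae_nonpos_of_integrals (h : M → ℝ) (hint : Integrable h m)
    (H : ∀ f : M → ℝ, IsBddMeasurable f → ∫ x, f x * h x ∂m = 0) :
    ∀ᵐ x ∂m, h x ≤ 0 := by
  set h' := hint.aestronglyMeasurable.aemeasurable.mk h with hh'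
  have hme : Measurable h' := hint.aestronglyMeasurable.aemeasurable.measurable_mk
  have heq : h =ᵐ[m] h' := hint.aestronglyMeasurable.aemeasurable.ae_eq_mk
  set A := {x | 0 < h' x} with hA'
  have hA : MeasurableSet A := measurableSet_lt measurable_const hme
  have hfb : IsBddMeasurable (A.indicator (fun _ => (1:ℝ))) := by
    refine ⟨measurable_const.indicator hA, 1, fun x => ?_⟩
    by_cases hx : x ∈ A <;> simp [Set.indicator_of_mem, Set.indicator_of_notMem, hx]
  have h0 : ∫ x, A.indicator (fun _ => (1:ℝ)) x * h x ∂m = 0 := H _ hfb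
  have hind : (fun x => A.indicator (fun _ => (1:ℝ)) x * h x) = A.indicator h := by
    funext x; by_cases hx : x ∈ A <;>
      simp [Set.indicator_of_mem, Set.indicator_of_notMem, hx]
  rw [hind, integral_indicator hA] at h0
  have h0' : ∫ x in A, h' x ∂m = 0 := by
    rw [← h0]; exact integral_congr_ae (ae_restrict_of_ae heq.symm)
  have hmax : (fun x => max (h' x) 0) = A.indicator h' := by
    funext x
    by_cases hx : x ∈ A
    · have : 0 < h' x := hx
      simp [Set.indicator_of_mem hx, max_eq_left this.le]
    · have : ¬ 0 < h' x := hx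
      simp [Set.indicator_of_notMem hx, max_eq_right (not_lt.mp this)]
  have hint' : Integrable h' m := hint.congr heq
  have hposint : Integrable (fun x => max (h' x) 0) m := hint'.pos_part
  have hintmax : ∫ x, max (h' x) 0 ∂m = 0 := by
    rw [hmax, integral_indicator hA, h0']
  have := (integral_eq_zero_iff_of_nonneg (fun x => le_max_right _ _) hposint).mp hintmax
  filter_upwards [this, heq] with x hx hxe
  have : max (h' x) 0 = 0 := hx
  rw [hxe]
  by_contra hc
  push_neg at hc
  rw [max_eq_left hc.le] at this
  exact hc.ne' this

/-- If all integrals against bounded measurable functions vanish, the function is a.e. zero. -/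
lemma ae_zero_of_integrals (h : M → ℝ) (hint : Integrable h m)
    (H : ∀ f : M → ℝ, IsBddMeasurable f → ∫ x, f x * h x ∂m = 0) :
    h =ᵐ[m] 0 := by
  have h1 := ae_nonpos_of_integrals h hint H
  have h2 := ae_nonpos_of_integrals (fun x => -h x) hint.neg (by
    intro f hf
    have : ∫ x, f x * -h x ∂m = - ∫ x, f x * h x ∂m := by
      rw [← integral_neg]; congr 1; funext x; ring
    rw [this, H f hf, neg_zero])
  filter_upwards [h1, h2] with x a b
  have : -h x ≤ 0 := b
  simp only [Pi.zero_apply]; linarith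

end Aux

section CS
variable {M : Type*} [MeasurableSpace M] {m : Measure M} {V : Type*}
  [NormedAddCommGroup V] [InnerProductSpace ℝ V] [CompleteSpace V] (S : HilbertModule m V)

lemma pip_expand (v w : V) (c : ℝ) :
    S.pip (v + c • w) (v + c • w) =ᵐ[m]
      fun x => S.pip w w x * c ^ 2 + 2 * S.pip v w x * c + S.pip v v x := by
  filter_upwards [S.pip_add_left v (c • w) (v + c • w), S.pip_smul_left c w (v + c • w),
    S.pip_symm v (v + c • w), S.pip_add_left v (c • w) v, S.pip_smul_left c w v,
    S.pip_symm w v, S.pip_symm w (v + c • w), S.pip_add_left v (c • w) w,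
    S.pip_smul_left c w w] with x e1 e2 e3 e4 e5 e6 e7 e8 e9
  simp only [Pi.add_apply] at e1 e4 e8
  rw [e1, e3, e4, e5, e6, e2, e7, e8, e9]
  ring

/-- Pointwise (a.e.) Cauchy–Schwarz inequality for the pointwise scalar product. -/
lemma pip_cauchy (v w : V) :
    ∀ᵐ x ∂m, |S.pip v w x| ≤ Real.sqrt (S.pip v v x) * Real.sqrt (S.pip w w x) := by
  have hq : ∀ᵐ x ∂m, ∀ q : ℚ,
      0 ≤ S.pip w w x * (q:ℝ) ^ 2 + 2 * S.pip v w x * (q:ℝ) + S.pip v v x := by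
    rw [ae_all_iff]
    intro q
    filter_upwards [pip_expand S v w (q:ℝ), S.pip_nonneg (v + (q:ℝ) • w)] with x h1 h2
    rw [← h1]; exact h2
  filter_upwards [hq, S.pip_nonneg v, S.pip_nonneg w] with x hx hv hw
  set a := S.pip v v x
  set b := S.pip v w x
  set c := S.pip w w x
  have hall : ∀ t : ℝ, 0 ≤ c * (t * t) + 2 * b * t + a := by
    have hcl : IsClosed {t : ℝ | 0 ≤ c * (t * t) + 2 * b * t + a} :=
      isClosed_le continuous_const (by continuity)
    intro t
    have hsub : Set.range ((↑) : ℚ → ℝ) ⊆ {t : ℝ | 0 ≤ c * (t * t) + 2 * b * t + a} := by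
      rintro _ ⟨q, rfl⟩
      have := hx q
      simp only [Set.mem_setOf_eq]
      nlinarith [this]
    have hdr : closure (Set.range ((↑) : ℚ → ℝ)) = Set.univ :=
      (Rat.denseRange_cast (𝕜 := ℝ)).closure_range
    have ht : t ∈ closure {t : ℝ | 0 ≤ c * (t * t) + 2 * b * t + a} := by
      apply closure_mono hsub
      rw [hdr]; trivial
    rw [hcl.closure_eq] at ht
    exact ht
  have hd : discrim c (2 * b) a ≤ 0 := discrim_le_zero hall
  rw [discrim] at hd
  have hb2 : b ^ 2 ≤ a * c := by nlinarith
  calc |b| = Real.sqrt (b ^ 2) := (Real.sqrt_sq_eq_abs b).symm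
    _ ≤ Real.sqrt (a * c) := Real.sqrt_le_sqrt hb2
    _ = Real.sqrt a * Real.sqrt c := Real.sqrt_mul hv c

end CS

/-- Riesz representation for Hilbert modules: every bounded linear functional
`l` on a Hilbert module is represented by integration of the pointwise scalar product against
a unique `v ∈ M`; moreover `v ↦ L_v = ⟨v, ·⟩` is a pointwise-isometric module isomorphism
onto the dual module `M* = Hom(M; L¹(M,m))`: every module morphism `T : V → L¹` is of the
form `L_v` for a unique `v`, and the pointwise (dual) norm of `L_v` coincides `m`-a.e. with
the pointwise norm `√(pip v v)` of `v`. -/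
theorem stmt_5 {M : Type*} [MeasurableSpace M] (m : Measure M)
    {V : Type*} [NormedAddCommGroup V] [InnerProductSpace ℝ V] [CompleteSpace V]
    (S : HilbertModule m V) :
    (∀ l : V →L[ℝ] ℝ, ∃! v : V, ∀ w, l w = ∫ x, S.pip v w x ∂m) ∧
    (∀ T : V →L[ℝ] Lp ℝ 1 m, S.IsModuleMorphism T →
      ∃! v : V, ∀ w, ⇑(T w) =ᵐ[m] S.pip v w) ∧
    (∀ v : V, ∀ g : M → ℝ, Measurable g → (∀ᵐ x ∂m, 0 ≤ g x) →
      ((∀ w, ∀ᵐ x ∂m, |S.pip v w x| ≤ g x * Real.sqrt (S.pip w w x)) ↔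
        (∀ᵐ x ∂m, Real.sqrt (S.pip v v x) ≤ g x))) := by
  have hP1 : ∀ l : V →L[ℝ] ℝ, ∃! v : V, ∀ w, l w = ∫ x, S.pip v w x ∂m := by
    intro l
    refine ⟨(InnerProductSpace.toDual ℝ V).symm l, fun w => ?_, fun v' hv' => ?_⟩
    · rw [← S.inner_eq]
      exact (InnerProductSpace.toDual_symm_apply).symm
    · apply ext_inner_right ℝ
      intro w
      rw [S.inner_eq v' w, ← hv' w]
      exact (InnerProductSpace.toDual_symm_apply).symm
  refine ⟨hP1, ?_, ?_⟩
  · -- module morphisms into L¹ are represented by the pointwise scalar product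
    intro T hT
    set l : V →L[ℝ] ℝ := (L1.integralCLM).comp T with hl
    have hlw : ∀ w, l w = ∫ x, (T w) x ∂m := by
      intro w
      show L1.integralCLM (T w) = _
      rw [← L1.integral_eq, L1.integral_eq_integral]
    obtain ⟨v, hv, hvu⟩ := hP1 l
    refine ⟨v, fun w => ?_, fun v' hv' => ?_⟩
    · have hint : Integrable (fun x => (T w) x - S.pip v w x) m :=
        (L1.integrable_coeFn (T w)).sub (S.pip_integrable v w)
      have hzero : ∀ f : M → ℝ, IsBddMeasurable f →
          ∫ x, f x * ((T w) x - S.pip v w x) ∂m = 0 := by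
        intro f hf
        obtain ⟨hfm, C, hC⟩ := hf
        have hbdd : ∃ C, ∀ x, ‖f x‖ ≤ C := ⟨C, fun x => by simpa [Real.norm_eq_abs] using hC x⟩
        have hfT : Integrable (fun x => f x * (T w) x) m :=
          (L1.integrable_coeFn (T w)).bdd_mul hfm.aestronglyMeasurable
            (ae_of_all _ fun x => by simpa [Real.norm_eq_abs] using hC x)
        have hfp : Integrable (fun x => f x * S.pip v w x) m :=
          (S.pip_integrable v w).bdd_mul hfm.aestronglyMeasurable
            (ae_of_all _ fun x => by simpa [Real.norm_eq_abs] using hC x)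
        have e1 : ∫ x, f x * (T w) x ∂m = l (S.lsmul f w) := by
          rw [hlw]
          exact (integral_congr_ae (hT f ⟨hfm, C, hC⟩ w)).symm
        have epip : S.pip v (S.lsmul f w) =ᵐ[m] fun x => f x * S.pip v w x := by
          filter_upwards [S.pip_symm v (S.lsmul f w), S.lsmul_pip f ⟨hfm, C, hC⟩ w v,
            S.pip_symm w v] with x a bb cc
          simp only [a, bb, cc]
        have e2 : l (S.lsmul f w) = ∫ x, f x * S.pip v w x ∂m := by
          rw [hv (S.lsmul f w)]
          exact integral_congr_ae epip
        have hsplit : (fun x => f x * ((T w) x - S.pip v w x))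
            = fun x => f x * (T w) x - f x * S.pip v w x := by
          funext x; ring
        rw [hsplit, integral_sub hfT hfp, e1, e2, sub_self]
      have hz := ae_zero_of_integrals _ hint hzero
      filter_upwards [hz] with x hx
      have : (T w) x - S.pip v w x = 0 := hx
      linarith
    · apply hvu
      intro w
      rw [hlw w]
      exact integral_congr_ae (hv' w)
  · -- pointwise dual norm
    intro v g hgm hg
    constructor
    · intro H
      filter_upwards [H v, S.pip_nonneg v, hg] with x h1 h2 h3
      have hsq : Real.sqrt (S.pip v v x) ^ 2 = S.pip v v x := Real.sq_sqrt h2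
      rcases (Real.sqrt_nonneg (S.pip v v x)).eq_or_lt with h | h
      · rw [← h]; exact h3
      · rw [abs_of_nonneg h2] at h1
        nlinarith [h1, h, hsq]
    · intro H w
      filter_upwards [pip_cauchy S v w, H] with x h1 h2
      exact h1.trans (mul_le_mul_of_nonneg_right h2 (Real.sqrt_nonneg _))
end

section
/- Spectral comparison for the Bochner Laplacian: On a tamed Dirichlet space, the bottom of the spectrum of −Δ is at most the bottom of the spectrum of −Δ_B, i.e. inf σ(−Δ) ≤ inf σ(−Δ_B). -/
open MeasureTheory

/-- The spectral-bottom comparison setting on a tamed Dirichlet space: `H = L²(M,m)` carries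
the Dirichlet form `EH` with domain `F`, and `K = L²(TM)` carries the covariant energy form
`EK = Ẽ_cov` with domain `H12 = H^{1,2}(TM)`.  The map `theta X = |X|` (the pointwise norm)
preserves `L²`-norms, maps `H^{1,2}(TM)` into `F` and, by Kato's inequality,
`EH(|X|) ≤ E_cov(X)`.  By Rayleigh's theorem, the bottom of the spectrum of the generator of
a closed nonnegative form is the infimum of its Rayleigh quotients. -/
structure SpectralBottomSetting (H K : Type*)
    [NormedAddCommGroup H] [InnerProductSpace ℝ H] [CompleteSpace H]
    [NormedAddCommGroup K] [InnerProductSpace ℝ K] [CompleteSpace K] where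
  F : Set H
  EH : H → H → ℝ
  EH_nonneg : ∀ f ∈ F, 0 ≤ EH f f
  H12 : Set K
  EK : K → K → ℝ
  EK_nonneg : ∀ X ∈ H12, 0 ≤ EK X X
  /-- the pointwise-norm map `X ↦ |X|` -/
  theta : K → H
  theta_mem : ∀ X ∈ H12, theta X ∈ F
  theta_norm : ∀ X ∈ H12, ‖theta X‖ = ‖X‖
  /-- Kato's inequality: `E(|X|) ≤ E_cov(X)` for `X ∈ H^{1,2}(TM)` -/
  kato : ∀ X ∈ H12, EH (theta X) (theta X) ≤ EK X X

/-- spectral comparison for the Bochner Laplacian: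
`inf σ(−Δ) ≤ inf σ(−Δ_B)`, expressed through Rayleigh's variational characterization of the
spectral bottoms of the generators of the two forms. -/
theorem stmt_14 {H K : Type*}
    [NormedAddCommGroup H] [InnerProductSpace ℝ H] [CompleteSpace H]
    [NormedAddCommGroup K] [InnerProductSpace ℝ K] [CompleteSpace K]
    (S : SpectralBottomSetting H K) (hne : ∃ X ∈ S.H12, X ≠ 0) :
    sInf { r : ℝ | ∃ f ∈ S.F, f ≠ 0 ∧ r = S.EH f f / ‖f‖ ^ 2 }
      ≤ sInf { r : ℝ | ∃ X ∈ S.H12, X ≠ 0 ∧ r = S.EK X X / ‖X‖ ^ 2 } := by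
  obtain ⟨X0, hX0, hX0ne⟩ := hne
  have hBne : { r : ℝ | ∃ X ∈ S.H12, X ≠ 0 ∧ r = S.EK X X / ‖X‖ ^ 2 }.Nonempty :=
    ⟨_, X0, hX0, hX0ne, rfl⟩
  refine le_csInf hBne ?_
  rintro r ⟨X, hX, hXne, rfl⟩
  have hθ : S.theta X ∈ S.F := S.theta_mem X hX
  have hθn : ‖S.theta X‖ = ‖X‖ := S.theta_norm X hX
  have hθne : S.theta X ≠ 0 := by
    intro h
    apply hXne
    rw [← norm_eq_zero, ← hθn, h, norm_zero]
  have hAmem : S.EH (S.theta X) (S.theta X) / ‖S.theta X‖ ^ 2 ∈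
      { r : ℝ | ∃ f ∈ S.F, f ≠ 0 ∧ r = S.EH f f / ‖f‖ ^ 2 } :=
    ⟨_, hθ, hθne, rfl⟩
  have hbdd : BddBelow { r : ℝ | ∃ f ∈ S.F, f ≠ 0 ∧ r = S.EH f f / ‖f‖ ^ 2 } := by
    refine ⟨0, ?_⟩
    rintro r ⟨f, hf, _, rfl⟩
    exact div_nonneg (S.EH_nonneg f hf) (by positivity)
  calc sInf { r : ℝ | ∃ f ∈ S.F, f ≠ 0 ∧ r = S.EH f f / ‖f‖ ^ 2 }
      ≤ S.EH (S.theta X) (S.theta X) / ‖S.theta X‖ ^ 2 := csInf_le hbdd hAmem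
    _ ≤ S.EK X X / ‖X‖ ^ 2 := by
        rw [hθn]
        have : (0:ℝ) < ‖X‖ ^ 2 := pow_pos (norm_pos_iff.mpr hXne) 2
        gcongr
        exact S.kato X hX
end

section
/- Let (M, E, m) be a tamed Dirichlet space with Ricci measure Ric, defined on H_♯^{1,2}(TM)² and bounded below by κ in the sense that Ric(X,X) ≥ |X|²_∼ · κ for every X ∈ H_♯^{1,2}(TM). Define ric_* := ess inf{|X|^{−2}·ric(X,X) : X ∈ H_♯^{1,2}(TM), |X| ≤ 1 m-a.e.}, where ric(X,X) is the density of the m-absolutely continuous part of Ric(X,X). Then the negative part satisfies ric_*⁻ ≤ dκ⁻/dm m-almost everywhere, and hence ric_*⁻·m belongs to the extended Kato class of M. -/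
open MeasureTheory

namespace Stmt19Aux

variable {α : Type*} [MeasurableSpace α] {m : Measure α} [SigmaFinite m]

open scoped ENNReal

lemma toSM_mutuallySingular {ρ : Measure α} [IsFiniteMeasure ρ] (h : ρ ⟂ₘ m) :
    ρ.toSignedMeasure ⟂ᵥ m.toENNRealVectorMeasure := by
  obtain ⟨u, hu, hρu, hmu⟩ := h
  refine ⟨u, hu, fun t ht => ?_, fun t ht => ?_⟩
  · by_cases htm : MeasurableSet t
    · rw [Measure.toSignedMeasure_apply_measurable htm, measureReal_def, measure_mono_null ht hρu]
      simp
    · exact VectorMeasure.not_measurable _ htm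
  · by_cases htm : MeasurableSet t
    · rw [Measure.toENNRealVectorMeasure_apply_measurable htm]
      exact measure_mono_null ht hmu
    · exact VectorMeasure.not_measurable _ htm

lemma rnDeriv_toSignedMeasure (ρ : Measure α) [IsFiniteMeasure ρ] :
    (fun x => (ρ.rnDeriv m x).toReal) =ᵐ[m] ρ.toSignedMeasure.rnDeriv m := by
  refine SignedMeasure.eq_rnDeriv (μ := m) (ρ.singularPart m).toSignedMeasure _
    (integrable_toReal_of_lintegral_ne_top (ρ.measurable_rnDeriv m).aemeasurable
      (Measure.lintegral_rnDeriv_lt_top ρ m).ne)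
    (toSM_mutuallySingular (Measure.mutuallySingular_singularPart ρ m)) ?_
  have hsum : ρ.singularPart m + m.withDensity (ρ.rnDeriv m) = ρ :=
    Measure.singularPart_add_rnDeriv ρ m
  rw [withDensityᵥ_toReal (ρ.measurable_rnDeriv m).aemeasurable
      (Measure.lintegral_rnDeriv_lt_top ρ m).ne,
    ← Measure.toSignedMeasure_add]
  exact (Measure.toSignedMeasure_congr hsum).symm

lemma rnDeriv_zero : (0 : SignedMeasure α).rnDeriv m =ᵐ[m] 0 :=
  (SignedMeasure.eq_rnDeriv (μ := m) 0 0 (integrable_zero _ _ _)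
    VectorMeasure.MutuallySingular.zero_left (by rw [withDensityᵥ_zero, add_zero])).symm

lemma rnDeriv_nonneg_of_nonneg {w : SignedMeasure α} (hw : 0 ≤ w) :
    ∀ᵐ x ∂m, 0 ≤ w.rnDeriv m x := by
  have h : 0 ≤[Set.univ] w := (VectorMeasure.le_restrict_univ_iff_le _ _).2 hw
  have heq := SignedMeasure.toMeasureOfZeroLE_toSignedMeasure (s := w) h
  have h2 := rnDeriv_toSignedMeasure (m := m)
    (w.toMeasureOfZeroLE Set.univ MeasurableSet.univ h)
  rw [heq] at h2
  filter_upwards [h2] with x hx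
  rw [← hx]
  exact ENNReal.toReal_nonneg

/-- If `g = ofReal ∘ p` `m`-a.e., then the Radon–Nikodym derivative of `lam.withDensity g`
with respect to `m` is a.e. bounded by `ofReal (p x) * (lam.rnDeriv m x)`. -/
lemma key_bound {lam : Measure α} [IsFiniteMeasure lam] {g : α → ℝ≥0∞}
    (hg : AEMeasurable g lam) {p : α → ℝ}
    (hp : ∀ᵐ x ∂m, g x = ENNReal.ofReal (p x)) :
    ∀ᵐ x ∂m, (lam.withDensity g).rnDeriv m x ≤ ENNReal.ofReal (p x) * lam.rnDeriv m x := by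
  obtain ⟨g', hg'm, hgg'⟩ := hg
  have hcong : lam.withDensity g = lam.withDensity g' := withDensity_congr_ae hgg'
  have hdecomp : lam.withDensity g' =
      (lam.singularPart m).withDensity g'
        + m.withDensity (lam.rnDeriv m * g') := by
    conv_lhs => rw [← Measure.singularPart_add_rnDeriv lam m]
    rw [withDensity_add_measure,
      withDensity_mul _ (lam.measurable_rnDeriv m) hg'm]
  have hsing : (lam.singularPart m).withDensity g' ⟂ₘ m :=
    (Measure.mutuallySingular_singularPart lam m).mono_ac
      (withDensity_absolutelyContinuous _ _) Measure.AbsolutelyContinuous.rfl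
  have hrn : (lam.rnDeriv m * g') =ᵐ[m] (lam.withDensity g).rnDeriv m := by
    rw [hcong]
    exact Measure.eq_rnDeriv ((lam.measurable_rnDeriv m).mul hg'm) hsing hdecomp
  obtain ⟨E, hE_sub, hE_meas, hE0⟩ :=
    exists_measurable_superset_of_null (ae_iff.1 hgg')
  have hwdE : m.withDensity (lam.rnDeriv m) E = 0 :=
    le_antisymm (le_trans (Measure.le_iff'.1 (Measure.withDensity_rnDeriv_le lam m) E)
      hE0.le) (zero_le)
  have hd0 : ∀ᵐ x ∂m, x ∈ E → lam.rnDeriv m x = 0 := by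
    have h1 : ∫⁻ x in E, lam.rnDeriv m x ∂m = 0 := by
      rwa [← withDensity_apply _ hE_meas]
    exact (setLIntegral_eq_zero_iff hE_meas (lam.measurable_rnDeriv m)).1 h1
  filter_upwards [hrn, hp, hd0] with x hx hpx hdx
  rw [← hx]
  by_cases hxe : x ∈ E
  · simp [Pi.mul_apply, hdx hxe]
  · have hgx : g x = g' x := by
      by_contra hne
      exact hxe (hE_sub hne)
    simp only [Pi.mul_apply, ← hgx, hpx, mul_comm]
    exact le_rfl

/-- Two-sided a.e. bounds for the Radon–Nikodym derivative (w.r.t. `m`) of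
`lam.withDensityᵥ f`, where `f = p` `m`-a.e. and `0 ≤ p` `m`-a.e. -/
lemma wdv_rnDeriv_bounds {lam : Measure α} [IsFiniteMeasure lam] {f p : α → ℝ}
    (hq : ∀ᵐ x ∂m, f x = p x) (hp0 : ∀ᵐ x ∂m, 0 ≤ p x) :
    ∀ᵐ x ∂m, 0 ≤ SignedMeasure.rnDeriv (lam.withDensityᵥ f) m x ∧
      SignedMeasure.rnDeriv (lam.withDensityᵥ f) m x ≤ p x * (lam.rnDeriv m x).toReal := by
  by_cases hI : Integrable f lam
  · haveI := isFiniteMeasure_withDensity_ofReal hI.2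
    haveI := isFiniteMeasure_withDensity_ofReal hI.neg.2
    have heq := withDensityᵥ_eq_withDensity_pos_part_sub_withDensity_neg_part hI
    have h1 : SignedMeasure.rnDeriv (lam.withDensityᵥ f) m =ᵐ[m]
        (lam.withDensity fun x => ENNReal.ofReal (f x)).toSignedMeasure.rnDeriv m
          - (lam.withDensity fun x => ENNReal.ofReal (-f x)).toSignedMeasure.rnDeriv m := by
      rw [heq]
      exact SignedMeasure.rnDeriv_sub _ _ m
    have hA := rnDeriv_toSignedMeasure (m := m)
      (lam.withDensity fun x => ENNReal.ofReal (f x))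
    have hB := rnDeriv_toSignedMeasure (m := m)
      (lam.withDensity fun x => ENNReal.ofReal (-f x))
    have hCb := key_bound (m := m) (g := fun x => ENNReal.ofReal (f x)) (p := p)
      (ENNReal.measurable_ofReal.comp_aemeasurable hI.1.aemeasurable)
      (by filter_upwards [hq] with x h; rw [h])
    have hDb := key_bound (m := m) (g := fun x => ENNReal.ofReal (-f x)) (p := fun x => -p x)
      (ENNReal.measurable_ofReal.comp_aemeasurable hI.neg.1.aemeasurable)
      (by filter_upwards [hq] with x h; rw [h])
    filter_upwards [h1, hA, hB, hCb, hDb, hq, hp0, Measure.rnDeriv_lt_top lam m] with x h1x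
      hAx hBx hCx hDx hqx hpx hdx
    have hD0 : (lam.withDensity fun y => ENNReal.ofReal (-f y)).rnDeriv m x = 0 := by
      have h00 : ENNReal.ofReal (-p x) = 0 := by
        simp [ENNReal.ofReal_eq_zero, neg_nonpos.2 hpx]
      exact le_antisymm (by simpa [h00] using hDx) (zero_le)
    have hCle : ((lam.withDensity fun y => ENNReal.ofReal (f y)).rnDeriv m x).toReal
        ≤ p x * (lam.rnDeriv m x).toReal := by
      have hne : ENNReal.ofReal (p x) * lam.rnDeriv m x ≠ ∞ :=
        ENNReal.mul_ne_top ENNReal.ofReal_ne_top hdx.ne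
      calc ((lam.withDensity fun y => ENNReal.ofReal (f y)).rnDeriv m x).toReal
          ≤ (ENNReal.ofReal (p x) * lam.rnDeriv m x).toReal := ENNReal.toReal_mono hne hCx
        _ = p x * (lam.rnDeriv m x).toReal := by
            rw [ENNReal.toReal_mul, ENNReal.toReal_ofReal hpx]
    have hval : SignedMeasure.rnDeriv (lam.withDensityᵥ f) m x
        = ((lam.withDensity fun y => ENNReal.ofReal (f y)).rnDeriv m x).toReal := by
      rw [h1x, Pi.sub_apply, ← hAx, ← hBx, hD0]
      simp
    rw [hval]
    exact ⟨ENNReal.toReal_nonneg, hCle⟩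
  · have h0 : lam.withDensityᵥ f = 0 := by rw [Measure.withDensityᵥ, dif_neg hI]
    rw [h0]
    filter_upwards [rnDeriv_zero (m := m), hp0] with x hx hpx
    rw [hx]
    exact ⟨le_rfl, mul_nonneg hpx ENNReal.toReal_nonneg⟩

end Stmt19Aux

/-- A tamed Dirichlet space with Ricci measure `Ric` on `Hs = H♯^{1,2}(TM)`, bounded below by
the taming measure `κ ∈ K_{1−}(M)` in the sense `Ric(X,X) ≥ |X|²_∼ · κ` (the right-hand side
being the signed measure with density the quasi-continuous version `qcn X` of `|X|²` against
`κ`, expressed through the Jordan parts of `κ`).  The extended Kato class is abstracted as a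
predicate `Kato` on nonnegative measures which is stable under passing to smaller measures
and contains the `m`-absolutely continuous part `dκ⁻/dm · m` of `κ⁻`. -/
structure RicciLowerSetting (M : Type*) [MeasurableSpace M] (m : Measure M) (V : Type*)
    [NormedAddCommGroup V] [InnerProductSpace ℝ V] [CompleteSpace V] where
  /-- `H♯^{1,2}(TM)` -/
  Hs : Set V
  pip : V → V → M → ℝ
  pip_nonneg : ∀ X, ∀ᵐ x ∂m, 0 ≤ pip X X x
  /-- the quasi-continuous version of `|X|²` -/
  qcn : V → M → ℝ
  qcn_ae : ∀ X ∈ Hs, qcn X =ᵐ[m] pip X X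
  /-- the Ricci measure -/
  Ric : V → V → SignedMeasure M
  /-- the taming measure, in the extended Kato class `K_{1−}(M)` -/
  κ : SignedMeasure M
  /-- the lower Ricci bound `Ric(X,X) ≥ |X|²_∼ · κ` -/
  Ric_lower : ∀ X ∈ Hs,
    κ.toJordanDecomposition.posPart.withDensityᵥ (qcn X)
      - κ.toJordanDecomposition.negPart.withDensityᵥ (qcn X) ≤ Ric X X
  /-- membership in the extended Kato class `K_{1−}(M)` (for nonnegative measures) -/
  Kato : Measure M → Prop
  /-- the Kato class is stable under passing to pointwise smaller nonnegative measures -/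
  Kato_mono : ∀ μ ν : Measure M, ν ≤ μ → Kato μ → Kato ν
  /-- `dκ⁻/dm · m` belongs to the extended Kato class -/
  Kato_kneg : Kato (m.withDensity (κ.toJordanDecomposition.negPart.rnDeriv m))

/-- let `ric_* = ess inf{ |X|⁻²·ric(X,X) : X ∈ H♯^{1,2}(TM), |X| ≤ 1 m-a.e. }`,
where `ric(X,X) = d(Ric(X,X))_≪/dm` is the density of the `m`-absolutely continuous part of
`Ric(X,X)` (the essential infimum being characterized as the `m`-a.e. largest lower bound of
the family).  Then the negative part satisfies `ric_*⁻ ≤ dκ⁻/dm` m-a.e., and hence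
`ric_*⁻ · m` belongs to the extended Kato class of `M`. -/
theorem stmt_19 {M : Type*} [MeasurableSpace M] {m : Measure M} [SigmaFinite m] {V : Type*}
    [NormedAddCommGroup V] [InnerProductSpace ℝ V] [CompleteSpace V]
    (S : RicciLowerSetting M m V) (ricStar : M → ℝ)
    (h_lb : ∀ X ∈ S.Hs, (∀ᵐ x ∂m, S.pip X X x ≤ 1) →
      ∀ᵐ x ∂m, ricStar x ≤ (S.Ric X X).rnDeriv m x / S.pip X X x)
    (h_max : ∀ g : M → ℝ, Measurable g →
      (∀ X ∈ S.Hs, (∀ᵐ x ∂m, S.pip X X x ≤ 1) →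
        ∀ᵐ x ∂m, g x ≤ (S.Ric X X).rnDeriv m x / S.pip X X x) →
      ∀ᵐ x ∂m, g x ≤ ricStar x) :
    (∀ᵐ x ∂m, max (-(ricStar x)) 0
        ≤ (S.κ.toJordanDecomposition.negPart.rnDeriv m x).toReal) ∧
    S.Kato (m.withDensity fun x => ENNReal.ofReal (max (-(ricStar x)) 0)) := by
  set κp := S.κ.toJordanDecomposition.posPart with hκp
  set κn := S.κ.toJordanDecomposition.negPart with hκn
  have hd_fin := Measure.rnDeriv_lt_top κn m
  have key : ∀ X ∈ S.Hs, (∀ᵐ x ∂m, S.pip X X x ≤ 1) →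
      ∀ᵐ x ∂m, -((κn.rnDeriv m x).toReal) ≤ (S.Ric X X).rnDeriv m x / S.pip X X x := by
    intro X hX _
    have hq : ∀ᵐ x ∂m, S.qcn X x = S.pip X X x := S.qcn_ae X hX
    have hp0 := S.pip_nonneg X
    have hτ := Stmt19Aux.wdv_rnDeriv_bounds (m := m) (lam := κp) hq hp0
    have hν := Stmt19Aux.wdv_rnDeriv_bounds (m := m) (lam := κn) hq hp0
    have hle := S.Ric_lower X hX
    set sM := S.Ric X X with hsM
    set τ := κp.withDensityᵥ (S.qcn X) with hτdef
    set ν := κn.withDensityᵥ (S.qcn X) with hνdef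
    have hle' : τ - ν ≤ sM := hle
    have hw0 : (0 : SignedMeasure M) ≤ sM - (τ - ν) := by
      refine VectorMeasure.le_iff.2 fun i hi => ?_
      have h2 := hle' i hi
      rw [VectorMeasure.sub_apply, VectorMeasure.zero_apply]
      linarith
    have hw := Stmt19Aux.rnDeriv_nonneg_of_nonneg (m := m) hw0
    have e : sM = (τ - ν) + (sM - (τ - ν)) := by abel
    have hadd := SignedMeasure.rnDeriv_add (τ - ν) (sM - (τ - ν)) m
    rw [← e] at hadd
    have hsub := SignedMeasure.rnDeriv_sub τ ν m
    filter_upwards [hτ, hν, hw, hadd, hsub, hp0, hd_fin] with x hτx hνx hwx haddx hsubx hpx hdx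
    simp only [Pi.add_apply, Pi.sub_apply] at haddx hsubx
    have hr : -(S.pip X X x * (κn.rnDeriv m x).toReal) ≤ sM.rnDeriv m x := by
      rw [haddx, hsubx]
      have h3 := hτx.1
      have h4 := hνx.2
      linarith
    rcases hpx.lt_or_eq with hlt | heq0
    · rw [le_div_iff₀ hlt]
      have h5 : -(κn.rnDeriv m x).toReal * S.pip X X x
          = -(S.pip X X x * (κn.rnDeriv m x).toReal) := by ring
      linarith
    · rw [← heq0, div_zero]
      exact neg_nonpos.2 ENNReal.toReal_nonneg
  have hmax := h_max (fun y => -((κn.rnDeriv m y).toReal))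
    ((Measure.measurable_rnDeriv κn m).ennreal_toReal.neg) key
  have h1 : ∀ᵐ x ∂m, max (-(ricStar x)) 0 ≤ (κn.rnDeriv m x).toReal := by
    filter_upwards [hmax] with x hx
    exact max_le (by linarith) ENNReal.toReal_nonneg
  refine ⟨h1, ?_⟩
  refine S.Kato_mono _ _ ?_ S.Kato_kneg
  refine withDensity_mono ?_
  filter_upwards [h1] with x hx
  exact ENNReal.ofReal_le_of_le_toReal hx
end
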